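/- arXiv:1501.00095 — 2 statements merged into one kernel-verified Lean document; each statement's English description precedes it below -/
import Mathlib

section
/- For every sub-bimodule B of the A-A-bimodule A (i.e., every two-sided ideal of A), the set of all paths a_{ij} of Q that are contained in B is a k-basis of B. -/
set_option maxHeartbeats 1000000
set_option synthInstance.maxHeartbeats 400000

namespace DPF

open Matrix

/-- A finite quiver on `Fin n` (given by an arrow relation, no loops, no two-cycles)
whose underlying (undirected simple) graph is a tree. -/
structure TreeQuiver (n : ℕ) : Type where
  arr : Fin n → Fin n → Prop
  loopless : ∀ i, ¬ arr i i
  oneway : ∀ i j, arr i j → ¬ arr j i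
  isTree : (SimpleGraph.fromRel arr).IsTree

namespace TreeQuiver

variable {n : ℕ}

/-- The underlying simple graph of the quiver. -/
def G (Q : TreeQuiver n) : SimpleGraph (Fin n) := SimpleGraph.fromRel Q.arr

/-- `Q.Reach i j` : `j` is a successor of `i`, i.e. there is an oriented
(possibly trivial) path from `i` to `j`. -/
def Reach (Q : TreeQuiver n) (i j : Fin n) : Prop := Relation.ReflTransGen Q.arr i j

/-- `i` is a sink (no outgoing arrows). -/
def IsSink (Q : TreeQuiver n) (i : Fin n) : Prop := ∀ j, ¬ Q.arr i j

/-- `i` is a source (no incoming arrows). -/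
def IsSource (Q : TreeQuiver n) (i : Fin n) : Prop := ∀ j, ¬ Q.arr j i

/-- The degree of a vertex in the underlying graph. -/
noncomputable def deg (Q : TreeQuiver n) (i : Fin n) : ℕ := {j | Q.G.Adj i j}.ncard

/-- `i ∈ K(Q)`: `i` is a sink or a source. -/
def inK (Q : TreeQuiver n) (i : Fin n) : Prop := Q.IsSink i ∨ Q.IsSource i

/-- `i ∈ K'(Q)`: a sink or a source of degree at least 2. -/
def inK' (Q : TreeQuiver n) (i : Fin n) : Prop := Q.inK i ∧ 2 ≤ Q.deg i

/-- `Q` is admissible: all vertices of degree at least 3 are sinks or sources. -/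
def Admissible (Q : TreeQuiver n) : Prop := ∀ i, 3 ≤ Q.deg i → Q.inK i

/-- A maximal chain of `Q` is (the oriented path between) a pair `(s, t)` where `s` is a
source, `t` is a sink, and `t` is reachable from `s`. -/
def IsMaxChain (Q : TreeQuiver n) (s t : Fin n) : Prop :=
  Q.IsSource s ∧ Q.IsSink t ∧ Q.Reach s t

/-- The vertex set of a chain from `s` to `t`. -/
def chainSet (Q : TreeQuiver n) (s t : Fin n) : Set (Fin n) := {v | Q.Reach s v ∧ Q.Reach v t}

/-- The vertex set of the union of a collection `S` of (maximal) chains, i.e. of the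
corresponding "support" subgraph. -/
def suppVerts (Q : TreeQuiver n) (S : Set (Fin n × Fin n)) : Set (Fin n) :=
  {v | ∃ c ∈ S, v ∈ Q.chainSet c.1 c.2}

/-- The adjacency relation of the subgraph given by the union of the chains in `S`. -/
def suppAdj (Q : TreeQuiver n) (S : Set (Fin n × Fin n)) (i j : Fin n) : Prop :=
  Q.G.Adj i j ∧ ∃ c ∈ S, i ∈ Q.chainSet c.1 c.2 ∧ j ∈ Q.chainSet c.1 c.2

/-- The degree of a vertex in the subgraph given by the union of the chains in `S`. -/
noncomputable def suppDeg (Q : TreeQuiver n) (S : Set (Fin n × Fin n)) (i : Fin n) : ℕ :=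
  {j | Q.suppAdj S i j}.ncard

/-- The subgraph given by the union of the chains in `S` is connected. -/
def SuppConnected (Q : TreeQuiver n) (S : Set (Fin n × Fin n)) : Prop :=
  ∀ u ∈ Q.suppVerts S, ∀ v ∈ Q.suppVerts S, Relation.ReflTransGen (Q.suppAdj S) u v

/-- The two unions of (maximal) chains `S`, `T` are equal as subgraphs of `Q`. -/
def SuppEq (Q : TreeQuiver n) (S T : Set (Fin n × Fin n)) : Prop :=
  Q.suppVerts S = Q.suppVerts T ∧ ∀ i j, Q.suppAdj S i j ↔ Q.suppAdj T i j

/-- A path function: `α i` is a successor of `i` or `0` (here: `none`). -/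
def IsPathFun (Q : TreeQuiver n) (α : Fin n → Option (Fin n)) : Prop :=
  ∀ i j, α i = some j → Q.Reach i j

/-- Monotonicity of a path function. -/
def MonotoneFun (Q : TreeQuiver n) (α : Fin n → Option (Fin n)) : Prop :=
  ∀ i j x, Q.Reach j i → α i = some x → ∃ y, α j = some y ∧ Q.Reach y x

/-- The support of a function `α : Q₀ → Q₀ ∪ {0}`: the set of maximal chains containing
some value of `α`. -/
def suppF (Q : TreeQuiver n) (α : Fin n → Option (Fin n)) : Set (Fin n × Fin n) :=
  {c | Q.IsMaxChain c.1 c.2 ∧ ∃ i x, α i = some x ∧ x ∈ Q.chainSet c.1 c.2}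

/-- A special function: a monotone path function with connected support such that any
sink-or-source vertex of the support sent to `0` has degree `1` in the support. -/
def SpecialFun (Q : TreeQuiver n) (α : Fin n → Option (Fin n)) : Prop :=
  Q.IsPathFun α ∧ Q.MonotoneFun α ∧ Q.SuppConnected (Q.suppF α) ∧
    ∀ i, Q.inK i → i ∈ Q.suppVerts (Q.suppF α) → α i = none → Q.suppDeg (Q.suppF α) i = 1

/-- `Q.Gamma s t`: the vertex set of the connected component of `t` in the graph obtained
from `Q` by deleting the vertex `s`. -/
def Gamma (Q : TreeQuiver n) (s t : Fin n) : Set (Fin n) :=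
  {v | Relation.ReflTransGen (fun a b => Q.G.Adj a b ∧ a ≠ s ∧ b ≠ s) t v}

end TreeQuiver

open TreeQuiver

section Algebra

variable {n : ℕ} (Q : TreeQuiver n) (k : Type) [Field k]

/-- The path algebra of the tree quiver `Q` over `k`, realized concretely as the
subalgebra of `Matrix (Fin n) (Fin n) k` of matrices supported on the reachability
relation; the matrix unit in position `(j, i)` corresponds to the unique path
`a_{ji}` from `i` to `j`. -/
def pathAlg : Subalgebra k (Matrix (Fin n) (Fin n) k) where
  carrier := {x | ∀ i j, ¬ Q.Reach j i → x i j = 0}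
  mul_mem' := by
    intro x y hx hy i j hij
    rw [Matrix.mul_apply]
    refine Finset.sum_eq_zero fun m _ => ?_
    by_cases h1 : Q.Reach m i
    · have h2 : ¬ Q.Reach j m := fun h2 => hij (Relation.ReflTransGen.trans h2 h1)
      rw [hy m j h2, mul_zero]
    · rw [hx i m h1, zero_mul]
  one_mem' := by
    intro i j hij
    have hne : i ≠ j := by rintro rfl; exact hij Relation.ReflTransGen.refl
    exact Matrix.one_apply_ne hne
  add_mem' := by
    intro x y hx hy i j hij
    simp only [Matrix.add_apply, hx i j hij, hy i j hij, add_zero]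
  zero_mem' := by intro i j hij; rfl
  algebraMap_mem' := by
    intro r i j hij
    have hne : i ≠ j := by rintro rfl; exact hij Relation.ReflTransGen.refl
    simp [Matrix.algebraMap_matrix_apply, hne]

theorem std_mem (t s : Fin n) (h : Q.Reach s t) :
    Matrix.single t s (1 : k) ∈ pathAlg Q k := by
  intro i j hij
  by_cases h1 : t = i ∧ s = j
  · obtain ⟨rfl, rfl⟩ := h1
    exact absurd h hij
  · simp only [Matrix.single, Matrix.of_apply, if_neg h1]

/-- The path `a_{ts}` from `s` to `t`, as an element of the path algebra
(by convention `0` if `t` is not a successor of `s`). -/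
noncomputable def aEl (t s : Fin n) : pathAlg Q k :=
  haveI := Classical.dec (Q.Reach s t)
  if h : Q.Reach s t then ⟨Matrix.single t s 1, std_mem Q k t s h⟩ else 0

/-- The trivial path `e_i` at the vertex `i`. -/
noncomputable def e (i : Fin n) : pathAlg Q k :=
  ⟨Matrix.single i i 1, std_mem Q k i i Relation.ReflTransGen.refl⟩

/-- `B` is a two-sided ideal of the path algebra, i.e. a sub-bimodule of the regular
`A`-`A`-bimodule `A`. -/
def IsIdeal (B : Submodule k ↥(pathAlg Q k)) : Prop :=
  (∀ a : ↥(pathAlg Q k), ∀ x ∈ B, a * x ∈ B) ∧ (∀ a : ↥(pathAlg Q k), ∀ x ∈ B, x * a ∈ B)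

/-- `B` is an indecomposable sub-bimodule of `A`: a nonzero two-sided ideal which does not
decompose as an (internal) direct sum of two nonzero sub-bimodules. -/
def Indec (B : Submodule k ↥(pathAlg Q k)) : Prop :=
  IsIdeal Q k B ∧ B ≠ ⊥ ∧
    ∀ B1 B2 : Submodule k ↥(pathAlg Q k), IsIdeal Q k B1 → IsIdeal Q k B2 →
      B1 ⊔ B2 = B → B1 ⊓ B2 = ⊥ → B1 = ⊥ ∨ B2 = ⊥

/-- The support of a two-sided ideal `B`: the set of maximal chains `(s, t)` of `Q`
such that `a_{ts} ∈ B`. -/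
def suppB (B : Submodule k ↥(pathAlg Q k)) : Set (Fin n × Fin n) :=
  {c | Q.IsMaxChain c.1 c.2 ∧ aEl Q k c.2 c.1 ∈ B}

/-- The indecomposable projective left module `P_j = A e_j`, as a left ideal of `A`. -/
def Pmod (j : Fin n) : Submodule ↥(pathAlg Q k) ↥(pathAlg Q k) where
  carrier := {x | x * e Q k j = x}
  add_mem' := by
    intro a b ha hb
    show (a + b) * e Q k j = a + b
    rw [add_mul]
    rw [show a * e Q k j = a from ha, show b * e Q k j = b from hb]
  zero_mem' := by
    show (0 : ↥(pathAlg Q k)) * e Q k j = 0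
    rw [zero_mul]
  smul_mem' := by
    intro c x hx
    show (c • x) * e Q k j = c • x
    rw [smul_eq_mul, mul_assoc, show x * e Q k j = x from hx]

/-- `B e_i`, as a left ideal (left `A`-submodule) of `A`; here `B` is a two-sided ideal. -/
def BeiL (B : Submodule k ↥(pathAlg Q k)) (hB : IsIdeal Q k B) (i : Fin n) :
    Submodule ↥(pathAlg Q k) ↥(pathAlg Q k) where
  carrier := {x | x ∈ B ∧ x * e Q k i = x}
  add_mem' := by
    intro a b ha hb
    exact ⟨B.add_mem ha.1 hb.1, by rw [add_mul, ha.2, hb.2]⟩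
  zero_mem' := ⟨B.zero_mem, by rw [zero_mul]⟩
  smul_mem' := by
    intro c x hx
    refine ⟨?_, ?_⟩
    · show c * x ∈ B
      exact hB.1 c x hx.1
    · show (c • x) * e Q k i = c • x
      rw [smul_eq_mul, mul_assoc, hx.2]

/-- A left `A`-submodule `N` of `A` is (zero or) indecomposable. -/
def IndecL (N : Submodule ↥(pathAlg Q k) ↥(pathAlg Q k)) : Prop :=
  N ≠ ⊥ ∧ ∀ N1 N2 : Submodule ↥(pathAlg Q k) ↥(pathAlg Q k),
    N1 ⊔ N2 = N → N1 ⊓ N2 = ⊥ → N1 = ⊥ ∨ N2 = ⊥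

/-- `x` is "the" function `x_B` associated to the indecomposable sub-bimodule `B`:
`x i = none` iff `B e_i = 0`, and `x i = some j` implies `B e_i ≅ P_j` as left `A`-modules. -/
def IsXB (B : Submodule k ↥(pathAlg Q k)) (hB : IsIdeal Q k B) (x : Fin n → Option (Fin n)) :
    Prop :=
  ∀ i, (x i = none ↔ BeiL Q k B hB i = ⊥) ∧
    ∀ j, x i = some j →
      Nonempty (↥(BeiL Q k B hB i) ≃ₗ[↥(pathAlg Q k)] ↥(Pmod Q k j))

/-- The subspace `B_x` of `A` associated to a (special) function `x` : the `k`-linear span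
of all paths `a_{ts}` with `x s ≠ 0` and `t` a successor of `x s`. -/
def Bspan (x : Fin n → Option (Fin n)) : Submodule k ↥(pathAlg Q k) :=
  Submodule.span k {v | ∃ s xs t, x s = some xs ∧ Q.Reach xs t ∧ v = aEl Q k t s}

/-- The two-sided ideal `J_i`: the span of all paths of `Q` except the trivial path `e_i`. -/
def J (i : Fin n) : Submodule k ↥(pathAlg Q k) :=
  Submodule.span k {v | ∃ t s, Q.Reach s t ∧ ¬(t = i ∧ s = i) ∧ v = aEl Q k t s}

/-- The indecomposable direct summand `J_s^{(q)}` of `J_s` corresponding to the connected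
component (of `Q` with `s` deleted) containing the neighbour `t` of `s`: the span of all
paths `a_{pq}` with `p, q ∈ Γ^{(t)} ∪ {s}` other than `e_s`. -/
def Jc (s t : Fin n) : Submodule k ↥(pathAlg Q k) :=
  Submodule.span k {v | ∃ p q, Q.Reach q p ∧ p ∈ Q.Gamma s t ∪ {s} ∧ q ∈ Q.Gamma s t ∪ {s} ∧
    ¬(p = s ∧ q = s) ∧ v = aEl Q k p q}

end Algebra

section Tensor

open TensorProduct

/-- The multiplication map `I ⊗_k J → A` for two `k`-subspaces `I`, `J` of a `k`-algebra `A`. -/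
noncomputable def mulMap (k A : Type) [CommRing k] [Ring A] [Algebra k A]
    (I J : Submodule k A) : (↥I ⊗[k] ↥J) →ₗ[k] A :=
  TensorProduct.lift (LinearMap.compl₁₂ (LinearMap.mul k A) I.subtype J.subtype)

/-- The submodule of `I ⊗_k J` spanned by the "balancing" relators `ba ⊗ d - b ⊗ ad`;
the quotient of `I ⊗_k J` by it is `I ⊗_A J`, so the multiplication map
`I ⊗_A J → A` is injective if and only if the kernel of `mulMap` equals `balRel`. -/
noncomputable def balRel (k A : Type) [CommRing k] [Ring A] [Algebra k A]
    (I J : Submodule k A) : Submodule k (↥I ⊗[k] ↥J) :=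
  Submodule.span k {z | ∃ (b : I) (d : J) (a : A) (h1 : (b : A) * a ∈ I) (h2 : a * (d : A) ∈ J),
    z = (⟨(b : A) * a, h1⟩ : I) ⊗ₜ[k] d - (b ⊗ₜ[k] (⟨a * (d : A), h2⟩ : J))}

end Tensor

section PathBasis

variable {n : ℕ} {Q : TreeQuiver n} {k : Type} [Field k]

lemma coe_aEl {t s : Fin n} (h : Q.Reach s t) :
    (aEl Q k t s : Matrix (Fin n) (Fin n) k) = single t s 1 :=
  congrArg Subtype.val (dif_pos h)

lemma aEl_of_not_reach {t s : Fin n} (h : ¬ Q.Reach s t) : aEl Q k t s = 0 :=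
  dif_neg h

lemma reach_of_apply_ne_zero (x : pathAlg Q k) {t s : Fin n}
    (h : (x : Matrix (Fin n) (Fin n) k) t s ≠ 0) : Q.Reach s t :=
  not_not.1 (mt (x.2 t s) h)

lemma e_mul_mul_e (x : pathAlg Q k) {t s : Fin n} (h : Q.Reach s t) :
    e Q k t * x * e Q k s = (x : Matrix (Fin n) (Fin n) k) t s • aEl Q k t s := by
  apply Subtype.ext
  simp [e, coe_aEl h]

lemma eq_sum_smul_aEl (x : pathAlg Q k) :
    x = ∑ t, ∑ s, (x : Matrix (Fin n) (Fin n) k) t s • aEl Q k t s := by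
  apply Subtype.ext
  conv_lhs => rw [Matrix.matrix_eq_sum_single (x : Matrix (Fin n) (Fin n) k)]
  push_cast
  refine Finset.sum_congr rfl fun t _ => Finset.sum_congr rfl fun s _ => ?_
  by_cases h : Q.Reach s t
  · simp [coe_aEl h]
  · simp [x.2 t s h, aEl_of_not_reach h]

lemma IsIdeal.aEl_mem {B : Submodule k (pathAlg Q k)} (hB : IsIdeal Q k B)
    {x : pathAlg Q k} (hx : x ∈ B) {t s : Fin n}
    (hts : (x : Matrix (Fin n) (Fin n) k) t s ≠ 0) : aEl Q k t s ∈ B := by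
  have hcorner := hB.2 (e Q k s) _ (hB.1 (e Q k t) x hx)
  rw [e_mul_mul_e x (reach_of_apply_ne_zero x hts)] at hcorner
  simpa [hts] using B.smul_mem ((x : Matrix (Fin n) (Fin n) k) t s)⁻¹ hcorner

lemma linearIndependent_aEl :
    LinearIndependent k (fun p : {p : Fin n × Fin n // Q.Reach p.2 p.1} => aEl Q k p.1.1 p.1.2) := by
  apply LinearIndependent.of_comp (pathAlg Q k).val.toLinearMap
  have hcoe : (pathAlg Q k).val.toLinearMap ∘
      (fun p : {p : Fin n × Fin n // Q.Reach p.2 p.1} => aEl Q k p.1.1 p.1.2) =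
      Matrix.stdBasis k (Fin n) (Fin n) ∘ Subtype.val :=
    funext fun p => (coe_aEl p.2).trans (Matrix.stdBasis_eq_single k p.1.1 p.1.2).symm
  rw [hcoe]
  exact (Matrix.stdBasis k (Fin n) (Fin n)).linearIndependent.comp _ Subtype.val_injective

end PathBasis

theorem statement7_general {n : ℕ} (k : Type) [Field k]
    (Q : TreeQuiver n)
    (B : Submodule k ↥(pathAlg Q k)) (hB : IsIdeal Q k B) :
    Submodule.span k {v : ↥(pathAlg Q k) | (∃ t s, Q.Reach s t ∧ v = aEl Q k t s) ∧ v ∈ B} = B ∧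
    LinearIndependent k
      (fun v : {v : ↥(pathAlg Q k) // (∃ t s, Q.Reach s t ∧ v = aEl Q k t s) ∧ v ∈ B} =>
        (v : ↥(pathAlg Q k))) := by
  refine ⟨le_antisymm (Submodule.span_le.2 fun v hv => hv.2) fun x hx => ?_, ?_⟩
  · rw [eq_sum_smul_aEl x]
    refine Submodule.sum_mem _ fun t _ => Submodule.sum_mem _ fun s _ => ?_
    by_cases hts : (x : Matrix (Fin n) (Fin n) k) t s = 0
    · simp [hts]
    · exact Submodule.smul_mem _ _ <| Submodule.subset_span
        ⟨⟨t, s, reach_of_apply_ne_zero x hts, rfl⟩, hB.aEl_mem hx hts⟩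
  · refine linearIndependent_aEl.linearIndepOn_id.mono ?_
    rintro _ ⟨⟨t, s, hts, rfl⟩, -⟩
    exact ⟨⟨(t, s), hts⟩, rfl⟩

/-- For every sub-bimodule (two-sided ideal) `B` of `A`, the set of paths
`a_{ts}` of `Q` contained in `B` is a `k`-basis of `B`: it is linearly independent
and spans `B`. -/
theorem statement7 {n : ℕ} (k : Type) [Field k] [IsAlgClosed k] (hn : 1 < n)
    (Q : TreeQuiver n) (hadm : Q.Admissible) (hK' : ∃ s, Q.inK' s)
    (B : Submodule k ↥(pathAlg Q k)) (hB : IsIdeal Q k B) :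
    Submodule.span k {v : ↥(pathAlg Q k) | (∃ t s, Q.Reach s t ∧ v = aEl Q k t s) ∧ v ∈ B} = B ∧
    LinearIndependent k
      (fun v : {v : ↥(pathAlg Q k) // (∃ t s, Q.Reach s t ∧ v = aEl Q k t s) ∧ v ∈ B} =>
        (v : ↥(pathAlg Q k))) :=
  statement7_general k Q B hB

end DPF
end

section
/- The ideals J_i of A, for i ∈ Q0, satisfy the following relations: (a) J_i · J_i = J_i for all i; (b) J_i · J_j = J_j · J_i whenever there is no arrow between i and j in Q; (c) J_j · J_i · J_j = J_i · J_j · J_i = J_j · J_i whenever there is an arrow i → j in Q. -/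
set_option maxHeartbeats 1000000
set_option synthInstance.maxHeartbeats 400000

namespace DPF

open Matrix

open TreeQuiver

/-!
Each ideal occurring here is spanned by paths, and the product of two such spans is spanned by the
composites `a_{ts} a_{su}` of their paths, so every identity reduces to deciding which paths factor
suitably. Two facts about a tree quiver decide it: reachability is a partial order, and nothing lies
strictly between the ends of an arrow `i → j`. Hence `J_j J_i` is spanned by the paths not lying on
the arrow `i → j`, and multiplying it by `J_j` on the right or by `J_i` on the left changes nothing.
-/

namespace TreeQuiver

variable {n : ℕ} (Q : TreeQuiver n)

lemma adj_of_arr {a b : Fin n} (h : Q.arr a b) : Q.G.Adj a b :=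
  (SimpleGraph.fromRel_adj _ _ _).2 ⟨fun hab => Q.loopless a (hab ▸ h), Or.inl h⟩

lemma exists_isPath_of_reach {u v : Fin n} (h : Q.Reach u v) :
    ∃ p : Q.G.Walk u v, p.IsPath ∧ ∀ d ∈ p.darts, Q.arr d.fst d.snd := by
  have walk : ∃ p : Q.G.Walk u v, ∀ d ∈ p.darts, Q.arr d.fst d.snd := by
    induction h using Relation.ReflTransGen.head_induction_on with
    | refl => exact ⟨.nil, by simp⟩
    | head hab _ ih =>
      obtain ⟨p, hp⟩ := ih
      refine ⟨.cons (Q.adj_of_arr hab) p, ?_⟩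
      simpa [SimpleGraph.Walk.darts_cons] using ⟨hab, hp⟩
  obtain ⟨p, hp⟩ := walk
  exact ⟨p.bypass, p.bypass_isPath, fun d hd => hp d (p.darts_bypass_subset_darts hd)⟩

/-- In a tree the path from `u` to `v` is unique, so when `v` is a successor of `u` it is
the oriented one. -/
lemma arr_of_mem_darts {u v : Fin n} (h : Q.Reach u v) {p : Q.G.Walk u v} (hp : p.IsPath)
    {d : Q.G.Dart} (hd : d ∈ p.darts) : Q.arr d.fst d.snd := by
  obtain ⟨q, hq, hq_arr⟩ := Q.exists_isPath_of_reach h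
  have hpq : p = q :=
    congrArg Subtype.val ((Q.isTree.isAcyclic.subsingleton_path u v).elim ⟨p, hp⟩ ⟨q, hq⟩)
  exact hq_arr d (hpq ▸ hd)

lemma not_reach_of_arr {a b : Fin n} (h : Q.arr a b) : ¬ Q.Reach b a := fun hba =>
  Q.oneway a b h <| Q.arr_of_mem_darts hba (p := .cons (Q.adj_of_arr h).symm .nil)
    (by simp [(Q.adj_of_arr h).ne.symm]) (d := ⟨(b, a), (Q.adj_of_arr h).symm⟩) (by simp)

lemma reach_antisymm {a b : Fin n} (hab : Q.Reach a b) (hba : Q.Reach b a) : a = b := by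
  rcases hab.cases_head with rfl | ⟨x, hax, hxb⟩
  · rfl
  · exact absurd (hxb.trans hba) (Q.not_reach_of_arr hax)

lemma eq_or_eq_of_arr_of_reach {i j s : Fin n} (hij : Q.arr i j) (his : Q.Reach i s)
    (hsj : Q.Reach s j) : s = i ∨ s = j := by
  rcases his.cases_head with rfl | ⟨x, hix, hxs⟩
  · exact Or.inl rfl
  by_cases hxj : x = j
  · subst hxj
    exact Or.inr (Q.reach_antisymm hsj hxs)
  -- otherwise `x - i - j` would be the oriented path from `x` to `j`, against `i → x`
  have hxi := (Q.adj_of_arr hix).symm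
  have hij' := Q.adj_of_arr hij
  exact absurd (Q.arr_of_mem_darts (hxs.trans hsj) (p := .cons hxi (.cons hij' .nil))
    (by simp [hxi.ne, hij'.ne, hxj]) (d := ⟨(x, i), hxi⟩) (by simp)) (Q.oneway i x hix)

end TreeQuiver

section PathSpan

variable {n : ℕ} (Q : TreeQuiver n) (k : Type) [Field k]

def pathSpan (P : Fin n → Fin n → Prop) : Submodule k (pathAlg Q k) :=
  Submodule.span k {v | ∃ t s, Q.Reach s t ∧ P t s ∧ v = aEl Q k t s}

lemma J_eq_pathSpan (i : Fin n) : J Q k i = pathSpan Q k fun t s => ¬(t = i ∧ s = i) := rfl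

lemma aEl_mul_aEl {t s u : Fin n} (hst : Q.Reach s t) (hus : Q.Reach u s) :
    aEl Q k t s * aEl Q k s u = aEl Q k t u := by
  have hut : Q.Reach u t := hus.trans hst
  simp only [aEl, dif_pos hst, dif_pos hus, dif_pos hut]
  exact Subtype.ext (by simp [Matrix.single_mul_single_same])

lemma aEl_mul_aEl_of_ne {t s s' u : Fin n} (h : s ≠ s') : aEl Q k t s * aEl Q k s' u = 0 := by
  unfold aEl
  split_ifs
  · exact Subtype.ext (Matrix.single_mul_single_of_ne 1 t s s' h 1)
  all_goals simp

lemma pathSpan_mul (P₁ P₂ : Fin n → Fin n → Prop) :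
    pathSpan Q k P₁ * pathSpan Q k P₂ =
      pathSpan Q k fun t u => ∃ s, Q.Reach u s ∧ Q.Reach s t ∧ P₁ t s ∧ P₂ s u := by
  simp only [pathSpan, Submodule.span_mul_span]
  apply le_antisymm <;> rw [Submodule.span_le]
  · rintro _ ⟨_, ⟨t, s, hst, h₁, rfl⟩, _, ⟨s', u, hus', h₂, rfl⟩, rfl⟩
    dsimp only
    by_cases hs : s = s'
    · subst hs
      rw [aEl_mul_aEl Q k hst hus']
      exact Submodule.subset_span ⟨t, u, hus'.trans hst, ⟨s, hus', hst, h₁, h₂⟩, rfl⟩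
    · rw [aEl_mul_aEl_of_ne Q k hs]
      exact Submodule.zero_mem _
  · rintro _ ⟨t, u, -, ⟨s, hus, hst, h₁, h₂⟩, rfl⟩
    rw [← aEl_mul_aEl Q k hst hus]
    exact Submodule.subset_span (Set.mul_mem_mul ⟨t, s, hst, h₁, rfl⟩ ⟨s, u, hus, h₂, rfl⟩)

lemma pathSpan_congr {P P' : Fin n → Fin n → Prop} (h : ∀ t s, Q.Reach s t → (P t s ↔ P' t s)) :
    pathSpan Q k P = pathSpan Q k P' := by
  unfold pathSpan
  congr 1
  ext v
  exact exists₂_congr fun t s => ⟨fun ⟨hst, hP, hv⟩ => ⟨hst, (h t s hst).1 hP, hv⟩,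
    fun ⟨hst, hP, hv⟩ => ⟨hst, (h t s hst).2 hP, hv⟩⟩

/-- Spanned by the paths that are not part of an oriented path from `i` to `j`; for an arrow
`i → j` these are all paths except `e_i`, `e_j` and the arrow itself. -/
def pathSpanOutside (i j : Fin n) : Submodule k (pathAlg Q k) :=
  pathSpan Q k fun t u => ¬(Q.Reach i u ∧ Q.Reach t j)

variable {Q} {i j : Fin n}

lemma J_mul_J_of_not_arr (hji : ¬ Q.arr j i) :
    J Q k i * J Q k j = pathSpan Q k fun t u => ¬(t = i ∧ u = i) ∧ ¬(t = j ∧ u = j) := by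
  rw [J_eq_pathSpan, J_eq_pathSpan, pathSpan_mul]
  refine pathSpan_congr Q k fun t u hut => ⟨?_, fun ⟨hi, hj⟩ => ?_⟩
  · rintro ⟨s, hus, hst, hts, hsu⟩
    constructor <;> rintro ⟨rfl, rfl⟩
    · exact hts ⟨rfl, Q.reach_antisymm hst hus⟩
    · exact hsu ⟨Q.reach_antisymm hst hus, rfl⟩
  by_cases hu : u = j
  · subst hu
    by_cases ht : t = i
    · subst ht
      rcases hut.cases_head with rfl | ⟨s, hus, hst⟩
      · exact absurd ⟨rfl, rfl⟩ hi
      · exact ⟨s, .single hus, hst, fun h => hji (h.2 ▸ hus), fun h => Q.loopless _ (h.1 ▸ hus)⟩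
    · exact ⟨t, hut, .refl, fun h => ht h.1, hj⟩
  · exact ⟨u, .refl, hut, hi, fun h => hu h.1⟩

lemma J_mul_J_of_arr (hij : Q.arr i j) : J Q k j * J Q k i = pathSpanOutside Q k i j := by
  rw [J_eq_pathSpan, J_eq_pathSpan, pathSpan_mul]
  refine pathSpan_congr Q k fun t u hut => ⟨?_, fun hout => ?_⟩
  · rintro ⟨s, hus, hst, hts, hsu⟩ ⟨hiu, htj⟩
    rcases Q.eq_or_eq_of_arr_of_reach hij (hiu.trans hus) (hst.trans htj) with rfl | rfl
    · exact hsu ⟨rfl, Q.reach_antisymm hus hiu⟩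
    · exact hts ⟨Q.reach_antisymm htj hst, rfl⟩
  by_cases hu : u = i
  · subst hu
    exact ⟨t, hut, .refl, fun h => hout ⟨.refl, h.1 ▸ .refl⟩,
      fun h => hout ⟨h.1 ▸ .refl, h.1 ▸ .single hij⟩⟩
  · exact ⟨u, .refl, hut, fun h => hout ⟨h.2 ▸ .single hij, h.1 ▸ .refl⟩, fun h => hu h.1⟩

lemma pathSpanOutside_mul_J (hij : Q.Reach i j) :
    pathSpanOutside Q k i j * J Q k j = pathSpanOutside Q k i j := by
  rw [pathSpanOutside, J_eq_pathSpan, pathSpan_mul]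
  refine pathSpan_congr Q k fun t u hut => ⟨?_, fun hout => ?_⟩
  · rintro ⟨s, hus, -, hout, -⟩ ⟨hiu, htj⟩
    exact hout ⟨hiu.trans hus, htj⟩
  by_cases hu : u = j
  · subst hu
    exact ⟨t, hut, .refl, fun h => hout ⟨hij, h.2⟩, fun h => hout ⟨hij, h.1 ▸ .refl⟩⟩
  · exact ⟨u, .refl, hut, hout, fun h => hu h.2⟩

lemma J_mul_pathSpanOutside (hij : Q.Reach i j) :
    J Q k i * pathSpanOutside Q k i j = pathSpanOutside Q k i j := by
  rw [pathSpanOutside, J_eq_pathSpan, pathSpan_mul]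
  refine pathSpan_congr Q k fun t u hut => ⟨?_, fun hout => ?_⟩
  · rintro ⟨s, -, hst, -, hout⟩ ⟨hiu, htj⟩
    exact hout ⟨hiu, hst.trans htj⟩
  by_cases ht : t = i
  · subst ht
    exact ⟨u, .refl, hut, fun h => hout ⟨h.2 ▸ .refl, hij⟩, fun h => hout ⟨h.1, hij⟩⟩
  · exact ⟨t, hut, .refl, fun h => ht h.1, hout⟩

end PathSpan

theorem statement10_general {n : ℕ} (k : Type) [Field k]
    (Q : TreeQuiver n) (i j : Fin n) :
    (J Q k i * J Q k i = J Q k i) ∧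
    ((¬ Q.arr i j ∧ ¬ Q.arr j i) → J Q k i * J Q k j = J Q k j * J Q k i) ∧
    (Q.arr i j →
      (J Q k j * J Q k i * J Q k j = J Q k j * J Q k i ∧
       J Q k i * J Q k j * J Q k i = J Q k j * J Q k i)) := by
  refine ⟨?_, fun ⟨hij, hji⟩ => ?_, fun hij => ?_⟩
  · rw [J_mul_J_of_not_arr k (Q.loopless i)]
    exact pathSpan_congr Q k fun _ _ _ => and_self_iff
  · rw [J_mul_J_of_not_arr k hji, J_mul_J_of_not_arr k hij]
    exact pathSpan_congr Q k fun _ _ _ => and_comm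
  · rw [mul_assoc (J Q k i), J_mul_J_of_arr k hij, J_mul_pathSpanOutside k (.single hij),
      pathSpanOutside_mul_J k (.single hij)]
    exact ⟨rfl, rfl⟩

/-- The ideals `J_i` satisfy: (a) `J_i J_i = J_i`; (b) `J_i J_j = J_j J_i`
when there is no arrow between `i` and `j`; (c) `J_j J_i J_j = J_i J_j J_i = J_j J_i`
when there is an arrow `i → j`. -/
theorem statement10 {n : ℕ} (k : Type) [Field k] [IsAlgClosed k] (hn : 1 < n)
    (Q : TreeQuiver n) (hadm : Q.Admissible) (hK' : ∃ s, Q.inK' s) (i j : Fin n) :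
    (J Q k i * J Q k i = J Q k i) ∧
    ((¬ Q.arr i j ∧ ¬ Q.arr j i) → J Q k i * J Q k j = J Q k j * J Q k i) ∧
    (Q.arr i j →
      (J Q k j * J Q k i * J Q k j = J Q k j * J Q k i ∧
       J Q k i * J Q k j * J Q k i = J Q k j * J Q k i)) :=
  statement10_general k Q i j

end DPF
end
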